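/- arXiv:0907.0299 — 4 statements merged into one kernel-verified Lean document; each statement's English description precedes it below -/
import Mathlib

section
/- Let k ≥ 1, let g_1,…,g_k be real constants, and define Q : ℝ^{k+1} × ℝ^k → ℝ by Q(y,x) = exp(−Σ_{i=1}^{k} (e^{x_i − y_i} + g_i e^{y_{i+1} − x_i})). Then for all (y,x), Σ_{i=1}^{k+1} ∂²Q/∂y_i² − 2(Σ_{i=1}^{k} g_i e^{y_{i+1}−y_i}) Q = Σ_{i=1}^{k} ∂²Q/∂x_i² − 2(Σ_{i=1}^{k-1} g_i e^{x_{i+1}−x_i}) Q. Equivalently, the kernel Q intertwines the quadratic Toda Hamiltonians of gl_{k+1} and gl_k. -/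
/-!
Write `Q = exp (-S)`. Each variable enters `S` through at most two exponentials, one of the form
`a e^{-t}` and one of the form `b e^{t}`, so every second partial derivative of `Q` is
`(S_t ^ 2 - S_tt) Q` with `S_tt` the sum of these two exponentials. In the interlacing
`y₁, x₁, y₂, …, x_k, y_{k+1}`, write `U_i = e^{x_i - y_i}` and `V_i = g_{i-1} e^{y_i - x_{i-1}}`
for the two edges at `y_i`. After dividing by `Q`, the squares `U_i²`, `V_i²` and the linear terms
occur on both sides; the cross terms `U_i V_i = g_{i-1} e^{x_i - x_{i-1}}` met on the `y`-side and
`U_i V_{i+1} = g_i e^{y_{i+1} - y_i}` met on the `x`-side are exactly the two Toda potentials.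
-/

/-- Second partial derivative of `f` along the `i`-th coordinate at the point `p`. -/
noncomputable def pd2 (f : (ℕ → ℝ) → ℝ) (i : ℕ) (p : ℕ → ℝ) : ℝ :=
  deriv (deriv (fun t => f (Function.update p i t))) (p i)

open Finset Real

theorem Finset.sum_Icc_one_eq_sum_Icc_succ {M : Type*} [AddCommMonoid M] {f : ℕ → M}
    (hf : f 1 = 0) (n : ℕ) : ∑ i ∈ Icc 1 n, f i = ∑ i ∈ Icc 1 (n - 1), f (i + 1) := by
  cases n with
  | zero => simp
  | succ n =>
    rw [← Ioc_insert_left (by omega), sum_insert (by simp), hf, zero_add, Nat.add_sub_cancel,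
      ← Icc_add_one_left_eq_Ioc, ← map_add_right_Icc, sum_map]
    rfl

theorem deriv_deriv_exp_neg {φ φ' φ'' : ℝ → ℝ} (hφ : ∀ t, HasDerivAt φ (φ' t) t)
    (hφ' : ∀ t, HasDerivAt φ' (φ'' t) t) (t : ℝ) :
    deriv (deriv fun s => exp (-φ s)) t = (φ' t ^ 2 - φ'' t) * exp (-φ t) := by
  have h₁ : deriv (fun s => exp (-φ s)) = fun s => -φ' s * exp (-φ s) :=
    funext fun s => ((hφ s).neg.exp).deriv.trans (mul_comm _ _)
  have h₂ : HasDerivAt (fun s => -φ' s * exp (-φ s))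
      (-φ'' t * exp (-φ t) + -φ' t * (exp (-φ t) * -φ' t)) t :=
    (hφ' t).neg.mul (hφ t).neg.exp
  rw [h₁, h₂.deriv]
  ring

theorem pd2_exp_neg_sum {s : Finset ℕ} {i : ℕ} (hi : i ∈ s) {F : ℕ → ℝ → ℝ} {F' F'' : ℝ → ℝ}
    (hF : ∀ t, HasDerivAt (F i) (F' t) t) (hF' : ∀ t, HasDerivAt F' (F'' t) t) (p : ℕ → ℝ) :
    pd2 (fun q => exp (-∑ j ∈ s, F j (q j))) i p
      = (F' (p i) ^ 2 - F'' (p i)) * exp (-∑ j ∈ s, F j (p j)) := by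
  have hslice : ∀ t, ∑ j ∈ s, F j (Function.update p i t j)
      = F i t + ∑ j ∈ s \ {i}, F j (p j) := fun t => by
    simp only [Function.apply_update F p, sum_update_of_mem hi]
  have hp : ∑ j ∈ s, F j (p j) = F i (p i) + ∑ j ∈ s \ {i}, F j (p j) := by
    simpa using hslice (p i)
  unfold pd2
  simp only [hslice, hp]
  exact deriv_deriv_exp_neg (fun t => (hF t).add_const _) hF' (p i)

theorem pd2_exp_neg_sum_exp {s : Finset ℕ} {i : ℕ} (hi : i ∈ s) (a b p : ℕ → ℝ) :
    pd2 (fun q => exp (-∑ j ∈ s, (a j * exp (-q j) + b j * exp (q j)))) i p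
      = ((a i * exp (-p i) - b i * exp (p i)) ^ 2 - (a i * exp (-p i) + b i * exp (p i)))
        * exp (-∑ j ∈ s, (a j * exp (-p j) + b j * exp (p j))) := by
  have hE : ∀ c d t : ℝ, HasDerivAt (fun t => c * exp (-t) + d * exp t)
      (-c * exp (-t) + d * exp t) t := fun c d t =>
    ((((hasDerivAt_neg t).exp).const_mul c).add ((hasDerivAt_exp t).const_mul d)).congr_deriv
      (by ring)
  convert pd2_exp_neg_sum hi (F := fun j t => a j * exp (-t) + b j * exp t)
    (F' := fun t => -a i * exp (-t) + b i * exp t) (F'' := fun t => a i * exp (-t) + b i * exp t)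
    (hE (a i) (b i)) (fun t => by simpa using hE (-a i) (b i) t) p using 2
  ring

theorem sum_sq_sub_interlaced_eq {R : Type*} [CommRing R] (U V : ℕ → R) (k : ℕ) (hU : U (k + 1) = 0)
    (hV : V 1 = 0) :
    ∑ i ∈ Icc 1 (k + 1), ((U i - V i) ^ 2 - (U i + V i)) - 2 * ∑ i ∈ Icc 1 k, U i * V (i + 1)
      = ∑ i ∈ Icc 1 k, ((U i - V (i + 1)) ^ 2 - (U i + V (i + 1)))
        - 2 * ∑ i ∈ Icc 1 (k - 1), U (i + 1) * V (i + 1) := by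
  have split : ∀ (s : Finset ℕ) (u v : ℕ → R), ∑ i ∈ s, ((u i - v i) ^ 2 - (u i + v i))
      = ∑ i ∈ s, (u i ^ 2 - u i) + ∑ i ∈ s, (v i ^ 2 - v i) - 2 * ∑ i ∈ s, u i * v i :=
    fun s u v => by
      rw [mul_sum, ← sum_add_distrib, ← sum_sub_distrib]
      exact sum_congr rfl fun _ _ => by ring
  have hUU : ∑ i ∈ Icc 1 (k + 1), (U i ^ 2 - U i) = ∑ i ∈ Icc 1 k, (U i ^ 2 - U i) := by
    simp [sum_Icc_succ_top, hU]
  have hVV : ∑ i ∈ Icc 1 (k + 1), (V i ^ 2 - V i) = ∑ i ∈ Icc 1 k, (V (i + 1) ^ 2 - V (i + 1)) :=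
    sum_Icc_one_eq_sum_Icc_succ (f := fun i => V i ^ 2 - V i) (by simp [hV]) (k + 1)
  have hUV : ∑ i ∈ Icc 1 (k + 1), U i * V i = ∑ i ∈ Icc 1 (k - 1), U (i + 1) * V (i + 1) := by
    rw [sum_Icc_succ_top (by omega), hU, zero_mul, add_zero,
      sum_Icc_one_eq_sum_Icc_succ (by simp [hV])]
  simp only [split]
  rw [hUU, hVV, hUV]
  ring

noncomputable def todaKernel (k : ℕ) (g y x : ℕ → ℝ) : ℝ :=
  exp (-(∑ i ∈ Icc 1 k, (exp (x i - y i) + g i * exp (y (i + 1) - x i))))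

-- `U_i = e^{x_i - y_i}` and `V_i = g_{i-1} e^{y_i - x_{i-1}}`, cut off outside the interlacing and
-- written as a coefficient times `e^{∓y_i}`, the shape that `pd2_exp_neg_sum_exp` differentiates.
noncomputable def todaKernelU (k : ℕ) (x y : ℕ → ℝ) (i : ℕ) : ℝ :=
  (if i ≤ k then exp (x i) else 0) * exp (-y i)

noncomputable def todaKernelV (g x y : ℕ → ℝ) (i : ℕ) : ℝ :=
  (if 2 ≤ i then g (i - 1) * exp (-x (i - 1)) else 0) * exp (y i)

section TodaKernel

variable {k i : ℕ} {g x y : ℕ → ℝ}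

theorem todaKernelU_of_le (h : i ≤ k) : todaKernelU k x y i = exp (x i - y i) := by
  simp [todaKernelU, h, sub_eq_add_neg, exp_add]

theorem todaKernelU_succ_self : todaKernelU k x y (k + 1) = 0 := by
  simp [todaKernelU]

theorem todaKernelV_succ (h : 1 ≤ i) :
    todaKernelV g x y (i + 1) = g i * exp (y (i + 1) - x i) := by
  simp [todaKernelV, h, sub_eq_add_neg, exp_add, mul_assoc, mul_comm]

theorem todaKernelV_one : todaKernelV g x y 1 = 0 := by
  simp [todaKernelV]

theorem todaKernelU_mul_todaKernelV_succ (h₁ : 1 ≤ i) (h₂ : i ≤ k) :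
    todaKernelU k x y i * todaKernelV g x y (i + 1) = g i * exp (y (i + 1) - y i) := by
  rw [todaKernelU_of_le h₂, todaKernelV_succ h₁, mul_left_comm, ← exp_add]
  ring_nf

theorem todaKernelU_succ_mul_todaKernelV_succ (h₁ : 1 ≤ i) (h₂ : i + 1 ≤ k) :
    todaKernelU k x y (i + 1) * todaKernelV g x y (i + 1) = g i * exp (x (i + 1) - x i) := by
  rw [todaKernelU_of_le h₂, todaKernelV_succ h₁, mul_left_comm, ← exp_add]
  ring_nf

theorem todaKernel_eq_exp_neg_sum_y :
    todaKernel k g y x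
      = exp (-∑ j ∈ Icc 1 (k + 1), (todaKernelU k x y j + todaKernelV g x y j)) := by
  rw [todaKernel, sum_add_distrib, sum_add_distrib, sum_Icc_succ_top (by omega),
    todaKernelU_succ_self, add_zero, sum_Icc_one_eq_sum_Icc_succ todaKernelV_one,
    Nat.add_sub_cancel]
  congr 3 <;> refine sum_congr rfl fun j hj => ?_
  · rw [todaKernelU_of_le (mem_Icc.1 hj).2]
  · rw [todaKernelV_succ (mem_Icc.1 hj).1]

theorem todaKernel_eq_exp_neg_sum_x :
    todaKernel k g y x
      = exp (-∑ j ∈ Icc 1 k, (g j * exp (y (j + 1)) * exp (-x j) + exp (-y j) * exp (x j))) := by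
  simp only [todaKernel, sub_eq_add_neg, exp_add]
  congr 2
  exact sum_congr rfl fun j _ => by ring

theorem pd2_todaKernel_y (hi : i ∈ Icc 1 (k + 1)) :
    pd2 (fun y' => todaKernel k g y' x) i y
      = ((todaKernelU k x y i - todaKernelV g x y i) ^ 2
          - (todaKernelU k x y i + todaKernelV g x y i)) * todaKernel k g y x := by
  simp only [todaKernel_eq_exp_neg_sum_y]
  exact pd2_exp_neg_sum_exp hi _ _ y

theorem pd2_todaKernel_x (hi : i ∈ Icc 1 k) :
    pd2 (fun x' => todaKernel k g y x') i x
      = ((todaKernelU k x y i - todaKernelV g x y (i + 1)) ^ 2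
          - (todaKernelU k x y i + todaKernelV g x y (i + 1))) * todaKernel k g y x := by
  simp only [todaKernel_eq_exp_neg_sum_x]
  rw [pd2_exp_neg_sum_exp hi, todaKernelU_of_le (mem_Icc.1 hi).2,
    todaKernelV_succ (mem_Icc.1 hi).1]
  simp only [sub_eq_add_neg, exp_add]
  ring

end TodaKernel

theorem stmt_0_general (k : ℕ) (g : ℕ → ℝ) :
    let Q : (ℕ → ℝ) → (ℕ → ℝ) → ℝ := fun y x =>
      Real.exp (-(∑ i ∈ Finset.Icc 1 k,
        (Real.exp (x i - y i) + g i * Real.exp (y (i + 1) - x i))))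
    ∀ y x : ℕ → ℝ,
      (∑ i ∈ Finset.Icc 1 (k + 1), pd2 (fun y' => Q y' x) i y)
          - 2 * (∑ i ∈ Finset.Icc 1 k, g i * Real.exp (y (i + 1) - y i)) * Q y x
        = (∑ i ∈ Finset.Icc 1 k, pd2 (fun x' => Q y x') i x)
          - 2 * (∑ i ∈ Finset.Icc 1 (k - 1), g i * Real.exp (x (i + 1) - x i)) * Q y x := by
  intro Q y x
  set U := todaKernelU k x y
  set V := todaKernelV g x y
  have hy : ∀ i ∈ Icc 1 (k + 1), pd2 (fun y' => Q y' x) i y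
      = ((U i - V i) ^ 2 - (U i + V i)) * Q y x := fun _ hi => pd2_todaKernel_y hi
  have hx : ∀ i ∈ Icc 1 k, pd2 (fun x' => Q y x') i x
      = ((U i - V (i + 1)) ^ 2 - (U i + V (i + 1))) * Q y x := fun _ hi => pd2_todaKernel_x hi
  have hpot_y : ∑ i ∈ Icc 1 k, g i * exp (y (i + 1) - y i) = ∑ i ∈ Icc 1 k, U i * V (i + 1) :=
    sum_congr rfl fun i hi =>
      (todaKernelU_mul_todaKernelV_succ (mem_Icc.1 hi).1 (mem_Icc.1 hi).2).symm
  have hpot_x : ∑ i ∈ Icc 1 (k - 1), g i * exp (x (i + 1) - x i)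
      = ∑ i ∈ Icc 1 (k - 1), U (i + 1) * V (i + 1) :=
    sum_congr rfl fun i hi =>
      (todaKernelU_succ_mul_todaKernelV_succ (mem_Icc.1 hi).1 (by grind)).symm
  rw [sum_congr rfl hy, sum_congr rfl hx, ← sum_mul, ← sum_mul, hpot_y, hpot_x]
  linear_combination Q y x * sum_sq_sub_interlaced_eq U V k todaKernelU_succ_self todaKernelV_one

/-- The kernel `Q(y,x) = exp(−Σ_{i=1}^{k} (e^{x_i − y_i} + g_i e^{y_{i+1} − x_i}))`
intertwines the quadratic open Toda Hamiltonians of `gl_{k+1}` and `gl_k`. -/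
theorem stmt_0 (k : ℕ) (hk : 1 ≤ k) (g : ℕ → ℝ) :
    let Q : (ℕ → ℝ) → (ℕ → ℝ) → ℝ := fun y x =>
      Real.exp (-(∑ i ∈ Finset.Icc 1 k,
        (Real.exp (x i - y i) + g i * Real.exp (y (i + 1) - x i))))
    ∀ y x : ℕ → ℝ,
      (∑ i ∈ Finset.Icc 1 (k + 1), pd2 (fun y' => Q y' x) i y)
          - 2 * (∑ i ∈ Finset.Icc 1 k, g i * Real.exp (y (i + 1) - y i)) * Q y x
        = (∑ i ∈ Finset.Icc 1 k, pd2 (fun x' => Q y x') i x)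
          - 2 * (∑ i ∈ Finset.Icc 1 (k - 1), g i * Real.exp (x (i + 1) - x i)) * Q y x :=
  stmt_0_general k g
end

section
/- Let n ≥ 1, g_1 ∈ ℝ, g_2 > 0, g_3,…,g_{n+2} ∈ ℝ, and c = g_1/√(2g_2). Define, for x ∈ ℝ^n and z ∈ ℝ^{n+1} with z_1 < 0, Q(x,z) = ((1−e^{z_1})/(1+e^{z_1}))^{c} · exp(−(√(g_2/2)(e^{x_1+z_1} + e^{x_1−z_1}) + Σ_{i=2}^{n}(g_{i+1} e^{z_i − x_{i−1}} + e^{x_i − z_i}) + g_{n+2} e^{z_{n+1} − x_n})). Then H^{BC_n}(x) Q = H^{I*_{n+1}}(z) Q pointwise on {z_1 < 0}, where H^{BC_n}(x) = −(1/2)Σ_{i=1}^n ∂²/∂x_i² + g_1 e^{x_1} + g_2 e^{2x_1} + Σ_{i=1}^{n−1} g_{i+2} e^{x_{i+1}−x_i}, and H^{I*_{n+1}}(z) = −(1/2)Σ_{i=1}^{n+1} ∂²/∂z_i² − c/(e^{−z_1/2} − e^{z_1/2})² + 2c(c+1)/(e^{−z_1} − e^{z_1})² + g_3 √(g_2/2)(e^{z_1+z_2}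 + e^{z_2−z_1}) + Σ_{i=2}^{n} g_{i+2} e^{z_{i+1}−z_i}. -/
open Real Finset Function Filter Topology

def gaugeTerm (α β : ℝ) : ℝ := (α - β) ^ 2 - (α + β)

lemma deriv_deriv_exp_comp {φ φ' : ℝ → ℝ} {φ'' t : ℝ}
    (hφ : ∀ᶠ u in 𝓝 t, HasDerivAt φ (φ' u) u) (hφ' : HasDerivAt φ' φ'' t) :
    deriv (deriv fun u => exp (φ u)) t = exp (φ t) * (φ' t ^ 2 + φ'') := by
  have hd : deriv (fun u => exp (φ u)) =ᶠ[𝓝 t] fun u => exp (φ u) * φ' u :=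
    hφ.mono fun u hu => hu.exp.deriv
  rw [hd.deriv_eq]
  exact (hφ.self_of_nhds.exp.mul hφ').deriv.trans (by ring)

lemma hasDerivAt_mul_exp_add_mul_exp_neg (a b t : ℝ) :
    HasDerivAt (fun u => a * exp u + b * exp (-u)) (a * exp t - b * exp (-t)) t :=
  (((hasDerivAt_exp t).const_mul a).add ((hasDerivAt_neg t).exp.const_mul b)).congr_deriv
    (by ring)

lemma hasDerivAt_mul_exp_sub_mul_exp_neg (a b t : ℝ) :
    HasDerivAt (fun u => a * exp u - b * exp (-u)) (a * exp t + b * exp (-t)) t :=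
  (((hasDerivAt_exp t).const_mul a).sub ((hasDerivAt_neg t).exp.const_mul b)).congr_deriv
    (by ring)

lemma deriv_deriv_exp_neg_mul_exp_add (a b t : ℝ) :
    deriv (deriv fun u => exp (-(a * exp u + b * exp (-u)))) t
      = exp (-(a * exp t + b * exp (-t))) * gaugeTerm (a * exp t) (b * exp (-t)) := by
  rw [deriv_deriv_exp_comp (φ := fun u => -(a * exp u + b * exp (-u)))
    (φ' := fun u => -(a * exp u - b * exp (-u)))
    (.of_forall fun u => (hasDerivAt_mul_exp_add_mul_exp_neg a b u).neg)
    (hasDerivAt_mul_exp_sub_mul_exp_neg a b t).neg, gaugeTerm]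
  ring

lemma hasDerivAt_log_one_sub_exp_div_one_add_exp {t : ℝ} (ht : t < 0) :
    HasDerivAt (fun u => log ((1 - exp u) / (1 + exp u))) (sinh t)⁻¹ t := by
  have h1 : 0 < 1 - exp t := by linarith [exp_lt_one_iff.2 ht]
  have h2 : 0 < 1 + exp t := by positivity
  have hR : HasDerivAt (fun u => (1 - exp u) / (1 + exp u))
      ((-exp t * (1 + exp t) - (1 - exp t) * exp t) / (1 + exp t) ^ 2) t :=
    ((hasDerivAt_exp t).const_sub 1).div ((hasDerivAt_exp t).const_add 1) h2.ne'
  refine (hR.log (div_pos h1 h2).ne').congr_deriv ?_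
  have h3 : exp t ^ 2 - 1 ≠ 0 := by nlinarith
  rw [sinh_eq, exp_neg]
  field_simp
  ring

lemma deriv_deriv_rpow_mul_exp_neg {c a b t : ℝ} (ht : t < 0) :
    deriv (deriv fun u => ((1 - exp u) / (1 + exp u)) ^ c * exp (-(a * exp u + b * exp (-u)))) t
      = ((1 - exp t) / (1 + exp t)) ^ c * exp (-(a * exp t + b * exp (-t)))
        * ((c / sinh t - (a * exp t - b * exp (-t))) ^ 2 - c * cosh t / sinh t ^ 2
          - (a * exp t + b * exp (-t))) := by
  have hR : ∀ u < 0, 0 < (1 - exp u) / (1 + exp u) := fun u hu =>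
    div_pos (by linarith [exp_lt_one_iff.2 hu]) (by positivity)
  have heq : (fun u => ((1 - exp u) / (1 + exp u)) ^ c * exp (-(a * exp u + b * exp (-u))))
      =ᶠ[𝓝 t] fun u =>
        exp (c * log ((1 - exp u) / (1 + exp u)) - (a * exp u + b * exp (-u))) := by
    filter_upwards [Iio_mem_nhds ht] with u hu
    rw [rpow_def_of_pos (hR u hu), ← exp_add]
    ring_nf
  have hφ : ∀ᶠ u in 𝓝 t, HasDerivAt
      (fun u => c * log ((1 - exp u) / (1 + exp u)) - (a * exp u + b * exp (-u)))
      (c * (sinh u)⁻¹ - (a * exp u - b * exp (-u))) u := by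
    filter_upwards [Iio_mem_nhds ht] with u hu
    exact ((hasDerivAt_log_one_sub_exp_div_one_add_exp hu).const_mul c).sub
      (hasDerivAt_mul_exp_add_mul_exp_neg a b u)
  have hsinh : sinh t ≠ 0 := sinh_ne_zero.2 ht.ne
  have hφ' : HasDerivAt (fun u => c * (sinh u)⁻¹ - (a * exp u - b * exp (-u)))
      (c * (-cosh t / sinh t ^ 2) - (a * exp t + b * exp (-t))) t :=
    (((hasDerivAt_sinh t).inv hsinh).const_mul c).sub (hasDerivAt_mul_exp_sub_mul_exp_neg a b t)
  rw [heq.deriv.deriv_eq, deriv_deriv_exp_comp hφ hφ', ← heq.eq_of_nhds]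
  field_simp
  ring

noncomputable def expSum (s : Finset ℕ) (a b p : ℕ → ℝ) : ℝ :=
  ∑ j ∈ s, (a j * exp (p j) + b j * exp (-p j))

lemma expSum_update {s : Finset ℕ} {i : ℕ} (hi : i ∈ s) (a b p : ℕ → ℝ) (t : ℝ) :
    expSum s a b (update p i t) = expSum (s.erase i) a b p + (a i * exp t + b i * exp (-t)) := by
  rw [expSum, ← sum_erase_add _ _ hi, update_self, expSum]
  congr 1
  exact sum_congr rfl fun j hj => by rw [update_of_ne (ne_of_mem_erase hj)]

lemma exp_neg_expSum_eq {s : Finset ℕ} {i : ℕ} (hi : i ∈ s) (a b p : ℕ → ℝ) :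
    exp (-expSum s a b p)
      = exp (-expSum (s.erase i) a b p) * exp (-(a i * exp (p i) + b i * exp (-p i))) := by
  rw [← exp_add, ← neg_add, ← expSum_update hi, update_eq_self]

lemma pd2_mul_exp_neg_expSum {h : (ℕ → ℝ) → ℝ} {s : Finset ℕ} {i : ℕ} {p : ℕ → ℝ}
    (a b : ℕ → ℝ) (hh : ∀ t, h (update p i t) = h p) (hi : i ∈ s) :
    pd2 (fun q => h q * exp (-expSum s a b q)) i p
      = h p * exp (-expSum s a b p) * gaugeTerm (a i * exp (p i)) (b i * exp (-p i)) := by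
  have hsep : (fun t => h (update p i t) * exp (-expSum s a b (update p i t)))
      = fun t =>
        h p * exp (-expSum (s.erase i) a b p) * exp (-(a i * exp t + b i * exp (-t))) := by
    funext t
    rw [hh, expSum_update hi, neg_add, exp_add, mul_assoc]
  simp only [pd2, hsep, deriv_const_mul_field']
  rw [deriv_deriv_exp_neg_mul_exp_add, exp_neg_expSum_eq hi]
  ring

lemma pd2_rpow_mul_exp_neg_expSum (c : ℝ) {s : Finset ℕ} {i : ℕ} {p : ℕ → ℝ}
    (a b : ℕ → ℝ) (hi : i ∈ s) (hp : p i < 0) :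
    pd2 (fun q => ((1 - exp (q i)) / (1 + exp (q i))) ^ c * exp (-expSum s a b q)) i p
      = ((1 - exp (p i)) / (1 + exp (p i))) ^ c * exp (-expSum s a b p)
        * ((c / sinh (p i) - (a i * exp (p i) - b i * exp (-p i))) ^ 2
          - c * cosh (p i) / sinh (p i) ^ 2 - (a i * exp (p i) + b i * exp (-p i))) := by
  have hsep : (fun t => ((1 - exp (update p i t i)) / (1 + exp (update p i t i))) ^ c
        * exp (-expSum s a b (update p i t)))
      = fun t => exp (-expSum (s.erase i) a b p)
        * (((1 - exp t) / (1 + exp t)) ^ c * exp (-(a i * exp t + b i * exp (-t)))) := by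
    funext t
    rw [expSum_update hi, update_self, neg_add, exp_add]
    ring
  simp only [pd2, hsep, deriv_const_mul_field']
  rw [deriv_deriv_rpow_mul_exp_neg hp, exp_neg_expSum_eq hi]
  ring

lemma sum_Icc_add_one {M : Type*} [AddCommMonoid M] (f : ℕ → M) (a b : ℕ) :
    ∑ i ∈ Icc a b, f (i + 1) = ∑ i ∈ Icc (a + 1) (b + 1), f i := by
  rw [← map_add_right_Icc, sum_map]
  rfl

lemma sum_Icc_one_eq_add_sum_Icc_two {M : Type*} [AddCommMonoid M] (f : ℕ → M) {n : ℕ}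
    (hn : 1 ≤ n) : ∑ i ∈ Icc 1 n, f i = f 1 + ∑ i ∈ Icc 2 n, f i := by
  rw [← insert_Icc_add_one_left_eq_Icc hn, sum_insert (by simp)]
  rfl

lemma sum_Icc_gaugeTerm_telescope (u v : ℕ → ℝ) {n : ℕ} (hn : 1 ≤ n) :
    ∑ i ∈ Icc 2 n, (gaugeTerm (u i) (v i) - gaugeTerm (v (i - 1)) (u i)
        + 2 * (u i * v i - v (i - 1) * u i))
      = gaugeTerm (v n) 0 - gaugeTerm (v 1) 0 := by
  induction n, hn using Nat.le_induction with
  | base => simp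
  | succ m hm ih =>
    rw [sum_Icc_succ_top (by omega), ih, Nat.add_sub_cancel]
    simp only [gaugeTerm]
    ring

noncomputable def kernelExponent (n : ℕ) (g : ℕ → ℝ) (s : ℝ) (x z : ℕ → ℝ) : ℝ :=
  s * (exp (x 1 + z 1) + exp (x 1 - z 1))
    + (∑ i ∈ Icc 2 n, (g (i + 1) * exp (z i - x (i - 1)) + exp (x i - z i)))
    + g (n + 2) * exp (z (n + 1) - x n)

noncomputable def xCoeffPos (s : ℝ) (z : ℕ → ℝ) (i : ℕ) : ℝ :=
  if i = 1 then s * (exp (z 1) + exp (-z 1)) else exp (-z i)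

noncomputable def xCoeffNeg (g z : ℕ → ℝ) (i : ℕ) : ℝ := g (i + 2) * exp (z (i + 1))

noncomputable def zCoeffPos (g : ℕ → ℝ) (s : ℝ) (x : ℕ → ℝ) (i : ℕ) : ℝ :=
  if i = 1 then s * exp (x 1) else g (i + 1) * exp (-x (i - 1))

noncomputable def zCoeffNeg (n : ℕ) (s : ℝ) (x : ℕ → ℝ) (i : ℕ) : ℝ :=
  if i = 1 then s * exp (x 1) else if i ≤ n then exp (x i) else 0

section Coefficients

variable {n i : ℕ} {g x z : ℕ → ℝ} {s : ℝ}

lemma xCoeffPos_one_mul_exp :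
    xCoeffPos s z 1 * exp (x 1) = s * (exp (x 1 + z 1) + exp (x 1 - z 1)) := by
  simp only [xCoeffPos, if_pos, exp_add, exp_sub, exp_neg]
  ring

lemma xCoeffPos_mul_exp (hi : i ≠ 1) : xCoeffPos s z i * exp (x i) = exp (x i - z i) := by
  rw [xCoeffPos, if_neg hi, exp_sub, exp_neg]
  ring

lemma xCoeffNeg_mul_exp_neg :
    xCoeffNeg g z i * exp (-x i) = g (i + 2) * exp (z (i + 1) - x i) := by
  rw [xCoeffNeg, exp_sub, exp_neg]
  ring

lemma zCoeffPos_one : zCoeffPos g s x 1 = s * exp (x 1) := if_pos rfl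

lemma zCoeffNeg_one : zCoeffNeg n s x 1 = s * exp (x 1) := if_pos rfl

lemma zCoeffPos_mul_exp (hi : i ≠ 1) :
    zCoeffPos g s x i * exp (z i) = g (i + 1) * exp (z i - x (i - 1)) := by
  rw [zCoeffPos, if_neg hi, exp_sub, exp_neg]
  ring

lemma zCoeffNeg_mul_exp_neg (hi : i ≠ 1) (hin : i ≤ n) :
    zCoeffNeg n s x i * exp (-z i) = exp (x i - z i) := by
  rw [zCoeffNeg, if_neg hi, if_pos hin, exp_sub, exp_neg]
  ring

lemma zCoeffNeg_of_lt (hi : i ≠ 1) (hin : n < i) : zCoeffNeg n s x i = 0 := by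
  rw [zCoeffNeg, if_neg hi, if_neg (not_le.2 hin)]

end Coefficients

lemma kernelExponent_eq_expSum_fst {n : ℕ} (hn : 1 ≤ n) (g : ℕ → ℝ) (s : ℝ)
    (x z : ℕ → ℝ) :
    kernelExponent n g s x z = expSum (Icc 1 n) (xCoeffPos s z) (xCoeffNeg g z) x := by
  have hpos : ∑ i ∈ Icc 1 n, xCoeffPos s z i * exp (x i)
      = s * (exp (x 1 + z 1) + exp (x 1 - z 1)) + ∑ i ∈ Icc 2 n, exp (x i - z i) := by
    rw [sum_Icc_one_eq_add_sum_Icc_two _ hn, xCoeffPos_one_mul_exp]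
    exact congrArg _ (sum_congr rfl fun i hi => xCoeffPos_mul_exp (by rw [mem_Icc] at hi; omega))
  have hneg : ∑ i ∈ Icc 1 n, xCoeffNeg g z i * exp (-x i)
      = ∑ i ∈ Icc 2 n, g (i + 1) * exp (z i - x (i - 1))
        + g (n + 2) * exp (z (n + 1) - x n) := by
    have := sum_Icc_add_one (fun i => g (i + 1) * exp (z i - x (i - 1))) 1 n
    rw [sum_Icc_succ_top (by omega)] at this
    simpa [xCoeffNeg_mul_exp_neg] using this
  rw [kernelExponent, sum_add_distrib, expSum, sum_add_distrib, hpos, hneg]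
  ring

lemma kernelExponent_eq_expSum_snd {n : ℕ} (hn : 1 ≤ n) (g : ℕ → ℝ) (s : ℝ)
    (x z : ℕ → ℝ) :
    kernelExponent n g s x z = expSum (Icc 1 (n + 1)) (zCoeffPos g s x) (zCoeffNeg n s x) z := by
  have hone : zCoeffPos g s x 1 * exp (z 1) + zCoeffNeg n s x 1 * exp (-z 1)
      = s * (exp (x 1 + z 1) + exp (x 1 - z 1)) := by
    rw [zCoeffPos_one, zCoeffNeg_one, exp_add, exp_sub, exp_neg]
    ring
  have hmid : ∑ i ∈ Icc 2 n, (zCoeffPos g s x i * exp (z i) + zCoeffNeg n s x i * exp (-z i))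
      = ∑ i ∈ Icc 2 n, (g (i + 1) * exp (z i - x (i - 1)) + exp (x i - z i)) :=
    sum_congr rfl fun i hi => by
      simp only [mem_Icc] at hi
      rw [zCoeffPos_mul_exp (by omega), zCoeffNeg_mul_exp_neg (by omega) hi.2]
  rw [expSum, sum_Icc_one_eq_add_sum_Icc_two _ (by omega), hone,
    sum_Icc_succ_top (by omega), hmid, zCoeffPos_mul_exp (by omega),
    zCoeffNeg_of_lt (by omega) (by omega), kernelExponent, Nat.add_sub_cancel]
  ring

lemma inozemtsev_potential_eq (c : ℝ) {t : ℝ} (ht : t ≠ 0) :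
    -c / (exp (-t / 2) - exp (t / 2)) ^ 2 + 2 * c * (c + 1) / (exp (-t) - exp t) ^ 2
      = (c ^ 2 - c * cosh t) / (2 * sinh t ^ 2) := by
  have e1 : exp (-t / 2) - exp (t / 2) = -(2 * sinh (t / 2)) := by rw [sinh_eq, neg_div]; ring
  have e2 : exp (-t) - exp t = -(2 * sinh t) := by rw [sinh_eq]; ring
  have hsh : sinh (t / 2) ≠ 0 := sinh_ne_zero.2 (by positivity)
  have hch : cosh (t / 2) ≠ 0 := (cosh_pos _).ne'
  rw [e1, e2, show t = 2 * (t / 2) by ring, sinh_two_mul, cosh_two_mul]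
  field_simp
  linear_combination (-c) * cosh_sq_sub_sinh_sq (t / 2)

lemma conj_boundary_eq (c s x₁ z₁ z₂ g₃ : ℝ) (hz : z₁ ≠ 0) :
    -(1 / 2) * gaugeTerm (s * (exp (x₁ + z₁) + exp (x₁ - z₁))) (g₃ * exp (z₂ - x₁))
        + (2 * c * s * exp x₁ + 2 * s ^ 2 * exp (2 * x₁))
        + (1 / 2) * gaugeTerm (g₃ * exp (z₂ - x₁)) 0
      = -(1 / 2) * ((c / sinh z₁ - (s * exp x₁ * exp z₁ - s * exp x₁ * exp (-z₁))) ^ 2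
          - c * cosh z₁ / sinh z₁ ^ 2 - (s * exp x₁ * exp z₁ + s * exp x₁ * exp (-z₁)))
        + (-c / (exp (-z₁ / 2) - exp (z₁ / 2)) ^ 2
          + 2 * c * (c + 1) / (exp (-z₁) - exp z₁) ^ 2
          + g₃ * s * (exp (z₁ + z₂) + exp (z₂ - z₁))) := by
  have hE : exp z₁ ^ 2 - 1 ≠ 0 := by
    rw [← exp_nat_mul, sub_ne_zero, Ne, exp_eq_one_iff]
    simpa using hz
  rw [inozemtsev_potential_eq c hz, gaugeTerm, gaugeTerm, sinh_eq, cosh_eq]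
  simp only [exp_add, exp_sub, exp_neg, two_mul]
  field_simp
  ring

-- Both Hamiltonians applied to `Q`, divided by `Q`.
lemma conj_hamiltonians_eq {n : ℕ} (hn : 1 ≤ n) {g : ℕ → ℝ} {c s : ℝ}
    (hg1 : g 1 = 2 * c * s) (hg2 : g 2 = 2 * s ^ 2) {x z : ℕ → ℝ} (hz : z 1 ≠ 0) :
    -(1 / 2) * ∑ i ∈ Icc 1 n,
          gaugeTerm (xCoeffPos s z i * exp (x i)) (xCoeffNeg g z i * exp (-x i))
        + (g 1 * exp (x 1) + g 2 * exp (2 * x 1)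
          + ∑ i ∈ Icc 1 (n - 1), g (i + 2) * exp (x (i + 1) - x i))
      = -(1 / 2) * ((c / sinh (z 1)
              - (s * exp (x 1) * exp (z 1) - s * exp (x 1) * exp (-z 1))) ^ 2
            - c * cosh (z 1) / sinh (z 1) ^ 2
            - (s * exp (x 1) * exp (z 1) + s * exp (x 1) * exp (-z 1))
          + ∑ i ∈ Icc 2 (n + 1),
              gaugeTerm (zCoeffPos g s x i * exp (z i)) (zCoeffNeg n s x i * exp (-z i)))
        + (-c / (exp (-z 1 / 2) - exp (z 1 / 2)) ^ 2
          + 2 * c * (c + 1) / (exp (-z 1) - exp (z 1)) ^ 2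
          + g 3 * s * (exp (z 1 + z 2) + exp (z 2 - z 1))
          + ∑ i ∈ Icc 2 n, g (i + 2) * exp (z (i + 1) - z i)) := by
  set u : ℕ → ℝ := fun i => exp (x i - z i)
  set v : ℕ → ℝ := fun i => g (i + 2) * exp (z (i + 1) - x i)
  have hv : ∀ i, 1 ≤ i → v (i - 1) = g (i + 1) * exp (z i - x (i - 1)) := fun i hi => by
    simp only [v, show i - 1 + 2 = i + 1 by omega, Nat.sub_add_cancel hi]
  have hX : ∑ i ∈ Icc 1 n,
        gaugeTerm (xCoeffPos s z i * exp (x i)) (xCoeffNeg g z i * exp (-x i))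
      = gaugeTerm (s * (exp (x 1 + z 1) + exp (x 1 - z 1))) (v 1)
        + ∑ i ∈ Icc 2 n, gaugeTerm (u i) (v i) := by
    rw [sum_Icc_one_eq_add_sum_Icc_two _ hn, xCoeffPos_one_mul_exp, xCoeffNeg_mul_exp_neg]
    exact congrArg _ (sum_congr rfl fun i hi => by
      rw [xCoeffPos_mul_exp (by rw [mem_Icc] at hi; omega), xCoeffNeg_mul_exp_neg])
  have hZ : ∑ i ∈ Icc 2 (n + 1),
        gaugeTerm (zCoeffPos g s x i * exp (z i)) (zCoeffNeg n s x i * exp (-z i))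
      = ∑ i ∈ Icc 2 n, gaugeTerm (v (i - 1)) (u i) + gaugeTerm (v n) 0 := by
    rw [sum_Icc_succ_top (by omega), zCoeffPos_mul_exp (by omega),
      zCoeffNeg_of_lt (by omega) (by omega), zero_mul, ← hv (n + 1) (by omega),
      Nat.add_sub_cancel]
    refine congrArg (· + _) (sum_congr rfl fun i hi => ?_)
    simp only [mem_Icc] at hi
    rw [zCoeffPos_mul_exp (by omega), zCoeffNeg_mul_exp_neg (by omega) hi.2, hv i (by omega)]
  have hVx : ∑ i ∈ Icc 1 (n - 1), g (i + 2) * exp (x (i + 1) - x i)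
      = ∑ i ∈ Icc 2 n, v (i - 1) * u i := by
    rw [show Icc 2 n = Icc (1 + 1) (n - 1 + 1) by congr 1; omega, ← sum_Icc_add_one]
    refine sum_congr rfl fun i _ => ?_
    simp only [u, v, Nat.add_sub_cancel, mul_assoc, ← exp_add]
    ring_nf
  have hVz : ∑ i ∈ Icc 2 n, g (i + 2) * exp (z (i + 1) - z i) = ∑ i ∈ Icc 2 n, u i * v i :=
    sum_congr rfl fun i _ => by
      simp only [u, v, mul_left_comm _ (g _), ← exp_add]
      ring_nf
  have htel := sum_Icc_gaugeTerm_telescope u v hn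
  rw [sum_add_distrib, sum_sub_distrib, ← mul_sum, sum_sub_distrib] at htel
  have hbdry := conj_boundary_eq c s (x 1) (z 1) (z 2) (g 3) hz
  rw [hX, hZ, hVx, hVz, hg1, hg2]
  linear_combination hbdry - (1 / 2) * htel

/-- Recursive intertwining relation between the `BC_n` Toda chain (in `n` variables) and the
specialized Inozemtsev `I*_{n+1}` Toda chain (in `n+1` variables), pointwise on `{z_1 < 0}`. -/
theorem stmt_7 (n : ℕ) (hn : 1 ≤ n) (g : ℕ → ℝ) (hg2 : 0 < g 2)
    (c : ℝ) (hc : c = g 1 / Real.sqrt (2 * g 2)) :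
    let Q : (ℕ → ℝ) → (ℕ → ℝ) → ℝ := fun x z =>
      Real.rpow ((1 - Real.exp (z 1)) / (1 + Real.exp (z 1))) c *
      Real.exp (-(Real.sqrt (g 2 / 2) * (Real.exp (x 1 + z 1) + Real.exp (x 1 - z 1))
        + (∑ i ∈ Finset.Icc 2 n,
            (g (i + 1) * Real.exp (z i - x (i - 1)) + Real.exp (x i - z i)))
        + g (n + 2) * Real.exp (z (n + 1) - x n)))
    ∀ x z : ℕ → ℝ, z 1 < 0 →
      -(1 / 2) * (∑ i ∈ Finset.Icc 1 n, pd2 (fun x' => Q x' z) i x)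
          + (g 1 * Real.exp (x 1) + g 2 * Real.exp (2 * x 1)
              + ∑ i ∈ Finset.Icc 1 (n - 1), g (i + 2) * Real.exp (x (i + 1) - x i)) * Q x z
        = -(1 / 2) * (∑ i ∈ Finset.Icc 1 (n + 1), pd2 (fun z' => Q x z') i z)
          + (-c / (Real.exp (-z 1 / 2) - Real.exp (z 1 / 2)) ^ 2
              + 2 * c * (c + 1) / (Real.exp (-z 1) - Real.exp (z 1)) ^ 2
              + g 3 * Real.sqrt (g 2 / 2) * (Real.exp (z 1 + z 2) + Real.exp (z 2 - z 1))
              + ∑ i ∈ Finset.Icc 2 n, g (i + 2) * Real.exp (z (i + 1) - z i)) * Q x z := by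
  intro Q x z hz
  set s := √(g 2 / 2) with hs
  have hs2 : g 2 = 2 * s ^ 2 := by rw [hs, sq_sqrt (by positivity)]; ring
  have hs0 : 0 < s := sqrt_pos.2 (by positivity)
  have hg1 : g 1 = 2 * c * s := by
    rw [hc, show 2 * g 2 = (2 * s) ^ 2 by rw [hs2]; ring, sqrt_sq (by positivity)]
    field_simp
  have hQx : (fun x' => Q x' z) = fun q => ((1 - exp (z 1)) / (1 + exp (z 1))) ^ c
      * exp (-expSum (Icc 1 n) (xCoeffPos s z) (xCoeffNeg g z) q) :=
    funext fun q => by rw [← kernelExponent_eq_expSum_fst hn]; rfl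
  have hQz : (fun z' => Q x z') = fun q => ((1 - exp (q 1)) / (1 + exp (q 1))) ^ c
      * exp (-expSum (Icc 1 (n + 1)) (zCoeffPos g s x) (zCoeffNeg n s x) q) :=
    funext fun q => by rw [← kernelExponent_eq_expSum_snd hn]; rfl
  have hQ₁ := congrFun hQx x
  have hQ₂ := congrFun hQz z
  rw [hQx, hQz, sum_Icc_one_eq_add_sum_Icc_two _ (by omega : 1 ≤ n + 1),
    pd2_rpow_mul_exp_neg_expSum c _ _ (by simp) hz,
    sum_congr rfl fun i hi => pd2_mul_exp_neg_expSum _ _ (fun _ => rfl) hi,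
    sum_congr rfl fun i hi => pd2_mul_exp_neg_expSum _ _
      (fun t => by rw [update_of_ne (by rw [mem_Icc] at hi; omega)])
      (Icc_subset_Icc_left one_le_two hi),
    ← hQ₁, ← hQ₂, ← mul_sum, ← mul_sum, zCoeffPos_one, zCoeffNeg_one]
  linear_combination Q x z * conj_hamiltonians_eq hn hg1 hs2 hz.ne
end

section
/- Let c ∈ ℝ and λ ∈ ℂ. For u ∈ ℝ with u < 0 define the complex-valued function Q(u) = (1+e^{u})^{−c−iλ} (1−e^{u})^{c−iλ} e^{iλ u} (using the real logarithm of the positive bases). Then Q satisfies the ODE (−(1/2) Q'' + g̃_1/(e^{−u/2} − e^{u/2})² · Q + g̃_2/(e^{−u} − e^{u})² · Q) = (λ²/2) Q on (−∞,0), where g̃_1 = −(2iλ+1)c and g̃_2 = 2(iλ + c) + 2(iλ + c)². -/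
/-!
Write `Q = exp φ` with `φ(u) = a log(1 + eᵘ) + b log(1 - eᵘ) + iλu`, where `a = -c - iλ`
and `b = c - iλ`. Then `Q'' = (φ'' + φ'²) Q`, and `φ'`, `φ''` and the two potentials are
rational functions of `x = eᵘ` (since `(e⁻ᵛ - eᵛ)² = (1 - e²ᵛ)² / e²ᵛ`), so after dividing
by `Q` the eigenvalue equation is a rational identity in `x`, `c` and `iλ`.
-/

open Complex

open Filter Topology in
theorem deriv_deriv_cexp_comp {𝕜 : Type*} [NontriviallyNormedField 𝕜] [NormedAlgebra 𝕜 ℂ]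
    {f f' : 𝕜 → ℂ} {f'' : ℂ} {u : 𝕜} (hf : ∀ᶠ v in 𝓝 u, HasDerivAt f (f' v) v)
    (hf' : HasDerivAt f' f'' u) :
    deriv (deriv fun v => cexp (f v)) u = (f'' + f' u ^ 2) * cexp (f u) := by
  have hderiv : deriv (fun v => cexp (f v)) =ᶠ[𝓝 u] fun v => cexp (f v) * f' v :=
    hf.mono fun v hv => hv.cexp.deriv
  rw [hderiv.deriv_eq]
  exact (hf.self_of_nhds.cexp.mul hf').deriv.trans (by ring)

namespace Real

theorem hasDerivAt_log_one_add_mul_exp {s u : ℝ} (h : 1 + s * exp u ≠ 0) :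
    HasDerivAt (fun v => log (1 + s * exp v)) (s * exp u / (1 + s * exp u)) u := by
  simpa using (((hasDerivAt_exp u).const_mul s).const_add 1).log h

theorem hasDerivAt_mul_exp_div_one_add_mul_exp {s u : ℝ} (h : 1 + s * exp u ≠ 0) :
    HasDerivAt (fun v => s * exp v / (1 + s * exp v)) (s * exp u / (1 + s * exp u) ^ 2) u := by
  have hnum := (hasDerivAt_exp u).const_mul s
  exact (hnum.fun_div (hnum.const_add 1) h).congr_deriv (by ring)

theorem one_sub_exp_ne_zero {u : ℝ} (hu : u ≠ 0) : 1 - exp u ≠ 0 :=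
  sub_ne_zero.2 fun h => hu (exp_eq_one_iff u |>.1 h.symm)

theorem sq_exp_neg_sub_exp (v : ℝ) :
    (exp (-v) - exp v) ^ 2 = (1 - exp (2 * v)) ^ 2 / exp (2 * v) := by
  rw [exp_neg, two_mul, exp_add]
  field_simp

end Real

noncomputable def phase (a b m : ℂ) (u : ℝ) : ℂ :=
  a * Real.log (1 + Real.exp u) + b * Real.log (1 - Real.exp u) + m * u

noncomputable def phaseDeriv (a b m : ℂ) (u : ℝ) : ℂ :=
  a * (Real.exp u / (1 + Real.exp u) : ℝ) + b * (-Real.exp u / (1 - Real.exp u) : ℝ) + m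

section Phase

variable (a b m : ℂ) {u : ℝ}

theorem hasDerivAt_phase (hu : u ≠ 0) : HasDerivAt (phase a b m) (phaseDeriv a b m u) u := by
  have hu' : 1 + -1 * Real.exp u ≠ 0 := by
    simpa [← sub_eq_add_neg] using Real.one_sub_exp_ne_zero hu
  have h₁ : HasDerivAt (fun v => Real.log (1 + Real.exp v))
      (Real.exp u / (1 + Real.exp u)) u := by
    simpa using Real.hasDerivAt_log_one_add_mul_exp (s := 1) (u := u) (by positivity)
  have h₂ : HasDerivAt (fun v => Real.log (1 - Real.exp v))
      (-Real.exp u / (1 - Real.exp u)) u := by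
    simpa [← sub_eq_add_neg, neg_div] using Real.hasDerivAt_log_one_add_mul_exp hu'
  have := ((h₁.ofReal_comp.const_mul a).add (h₂.ofReal_comp.const_mul b)).add
    ((hasDerivAt_id u).ofReal_comp.const_mul m)
  exact this.congr_deriv (by simp [phaseDeriv])

theorem hasDerivAt_phaseDeriv (hu : u ≠ 0) :
    HasDerivAt (phaseDeriv a b m)
      (a * (Real.exp u / (1 + Real.exp u) ^ 2 : ℝ)
        + b * (-Real.exp u / (1 - Real.exp u) ^ 2 : ℝ)) u := by
  have hu' : 1 + -1 * Real.exp u ≠ 0 := by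
    simpa [← sub_eq_add_neg] using Real.one_sub_exp_ne_zero hu
  have h₁ : HasDerivAt (fun v => Real.exp v / (1 + Real.exp v))
      (Real.exp u / (1 + Real.exp u) ^ 2) u := by
    simpa using Real.hasDerivAt_mul_exp_div_one_add_mul_exp (s := 1) (u := u) (by positivity)
  have h₂ : HasDerivAt (fun v => -Real.exp v / (1 - Real.exp v))
      (-Real.exp u / (1 - Real.exp u) ^ 2) u := by
    simpa [← sub_eq_add_neg] using Real.hasDerivAt_mul_exp_div_one_add_mul_exp hu'
  exact ((h₁.ofReal_comp.const_mul a).add (h₂.ofReal_comp.const_mul b)).add_const m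

end Phase

/-- The eigenvalue equation divided by `Q`, with `m = iλ` and `x = eᵘ`. -/
theorem ode_residual_eq {K : Type*} [Field K] [CharZero K] (m c x : K) (h₁ : 1 + x ≠ 0)
    (h₂ : 1 - x ≠ 0) :
    -(1 / 2 : K) * (((-c - m) * (x / (1 + x) ^ 2) + (c - m) * (-x / (1 - x) ^ 2))
        + ((-c - m) * (x / (1 + x)) + (c - m) * (-x / (1 - x)) + m) ^ 2)
      + (-(2 * m + 1) * c) / ((1 - x) ^ 2 / x)
      + (2 * (m + c) + 2 * (m + c) ^ 2) / ((1 - x ^ 2) ^ 2 / x ^ 2)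
    = -(m ^ 2) / 2 := by
  have h₃ : 1 - x ^ 2 ≠ 0 := by
    rw [show (1 : K) - x ^ 2 = (1 + x) * (1 - x) by ring]
    exact mul_ne_zero h₁ h₂
  field_simp
  ring

/-- The one-particle eigenvalue equation `(H^{I_1} − λ²/2) Q = 0` for the rank-one
Inozemtsev Toda Hamiltonian, with
`Q(u) = (1+e^u)^{−c−iλ}(1−e^u)^{c−iλ} e^{iλu}` (powers via the real logarithm of the
positive bases), `g̃_1 = −(2iλ+1)c`, `g̃_2 = 2(iλ+c)+2(iλ+c)²`. -/
theorem stmt_10 (c : ℝ) (lam : ℂ) :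
    let Q : ℝ → ℂ := fun u =>
      Complex.exp ((-(c : ℂ) - Complex.I * lam) * (Real.log (1 + Real.exp u) : ℂ)) *
      Complex.exp (((c : ℂ) - Complex.I * lam) * (Real.log (1 - Real.exp u) : ℂ)) *
      Complex.exp (Complex.I * lam * (u : ℂ))
    ∀ u : ℝ, u < 0 →
      -(1 / 2 : ℂ) * deriv (deriv Q) u
          + (-(2 * Complex.I * lam + 1) * (c : ℂ))
              / ((Real.exp (-u / 2) - Real.exp (u / 2) : ℝ) : ℂ) ^ 2 * Q u
          + (2 * (Complex.I * lam + (c : ℂ)) + 2 * (Complex.I * lam + (c : ℂ)) ^ 2)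
              / ((Real.exp (-u) - Real.exp u : ℝ) : ℂ) ^ 2 * Q u
        = (lam ^ 2 / 2) * Q u := by
  intro Q u hu
  have hQ : Q = fun v => cexp (phase (-c - I * lam) (c - I * lam) (I * lam) v) := by
    funext v
    simp only [Q, phase, exp_add]
  have hQ'' : deriv (deriv Q) u =
      ((-c - I * lam) * (Real.exp u / (1 + Real.exp u) ^ 2 : ℝ)
        + (c - I * lam) * (-Real.exp u / (1 - Real.exp u) ^ 2 : ℝ)
        + phaseDeriv (-c - I * lam) (c - I * lam) (I * lam) u ^ 2) * Q u := by
    rw [hQ]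
    exact deriv_deriv_cexp_comp
      ((eventually_ne_nhds hu.ne).mono fun v hv => hasDerivAt_phase _ _ _ hv)
      (hasDerivAt_phaseDeriv _ _ _ hu.ne)
  have hden₁ : ((Real.exp (-u / 2) - Real.exp (u / 2) : ℝ) : ℂ) ^ 2
      = (1 - Real.exp u) ^ 2 / Real.exp u := by
    rw [neg_div, ← ofReal_pow, Real.sq_exp_neg_sub_exp, mul_div_cancel₀ u two_ne_zero]
    norm_cast
  have hden₂ : ((Real.exp (-u) - Real.exp u : ℝ) : ℂ) ^ 2
      = (1 - Real.exp u ^ 2) ^ 2 / Real.exp u ^ 2 := by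
    rw [← ofReal_pow, Real.sq_exp_neg_sub_exp, two_mul, Real.exp_add]
    push_cast; ring
  have hlam : lam ^ 2 / 2 = -(I * lam) ^ 2 / 2 := by rw [mul_pow, I_sq]; ring
  have hx₁ : 1 + (Real.exp u : ℂ) ≠ 0 := by
    exact_mod_cast (by positivity : (0 : ℝ) < 1 + Real.exp u).ne'
  have hx₂ : 1 - (Real.exp u : ℂ) ≠ 0 := by exact_mod_cast Real.one_sub_exp_ne_zero hu.ne
  rw [hQ'', hden₁, hden₂, hlam, phaseDeriv]
  simp only [ofReal_div, ofReal_neg, ofReal_pow, ofReal_add, ofReal_sub, ofReal_one]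
  linear_combination Q u * ode_residual_eq (I * lam) c (Real.exp u) hx₁ hx₂
end

section
/- Let n ≥ 2 and g_1,…,g_{n+1} ∈ ℝ. Define Q : ℝ^n × ℝ^n → ℝ by Q(x,z) = exp(−g_1 e^{x_1+z_1} − Σ_{i=1}^{n−1}(e^{x_i − z_i} + g_{i+1} e^{z_{i+1} − x_i}) − e^{x_n − z_n} − g_{n+1} e^{−x_n − z_n}). Then pointwise: (−(1/2)Σ_{i=1}^n ∂²/∂x_i² + 2g_1 e^{2x_1} + Σ_{i=1}^{n−1} g_{i+1} e^{x_{i+1}−x_i} + g_n g_{n+1} e^{−x_n − x_{n−1}}) Q = (−(1/2)Σ_{i=1}^n ∂²/∂z_i² + g_1 g_2 e^{z_1+z_2} + Σ_{i=1}^{n−1} g_{i+1} e^{z_{i+1}−z_i} + 2 g_{n+1} e^{−2z_n}) Q. -/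
open Finset Function Real

theorem deriv_deriv_exp_comp_s13 {ψ ψ' : ℝ → ℝ} {ψ'' s : ℝ} (hψ : ∀ t, HasDerivAt ψ (ψ' t) t)
    (hψ' : HasDerivAt ψ' ψ'' s) :
    deriv (deriv fun t => exp (ψ t)) s = (ψ'' + ψ' s ^ 2) * exp (ψ s) := by
  have h : deriv (fun t => exp (ψ t)) = fun t => exp (ψ t) * ψ' t :=
    funext fun t => (hψ t).exp.deriv
  rw [h]
  exact ((hψ s).exp.mul hψ').deriv.trans (by ring)

theorem hasDerivAt_exp_sub_add_exp_sub (a b s t : ℝ) :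
    HasDerivAt (fun t => a * exp (t - s) + b * exp (s - t))
      (a * exp (t - s) + -b * exp (s - t)) t := by
  have h₁ := (((hasDerivAt_id t).sub_const s).exp).const_mul a
  have h₂ := (((hasDerivAt_id t).const_sub s).exp).const_mul b
  exact (h₁.add h₂).congr_deriv (by simp only [id]; ring)

/-- `(exp ψ)'' / exp ψ` at `s` for `ψ t = c - a * exp (t - s) - b * exp (s - t)`. -/
def expSecondDerivRatio {R : Type*} [CommRing R] (a b : R) : R := (a - b) ^ 2 - (a + b)

theorem pd2_exp_of_update_eq {φ : (ℕ → ℝ) → ℝ} {p : ℕ → ℝ} {i : ℕ} {a b : ℝ}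
    (hφ : ∀ t, φ (update p i t) = φ p - a * (exp (t - p i) - 1) - b * (exp (p i - t) - 1)) :
    pd2 (fun q => exp (φ q)) i p = expSecondDerivRatio a b * exp (φ p) := by
  unfold pd2
  set s := p i
  have hψ : (fun t => exp (φ (update p i t)))
      = fun t => exp ((-a * exp (t - s) + -b * exp (s - t)) + (φ p + a + b)) := by
    funext t
    rw [hφ]
    ring_nf
  rw [hψ, deriv_deriv_exp_comp_s13
    (fun t => (hasDerivAt_exp_sub_add_exp_sub (-a) (-b) s t).add_const (φ p + a + b))
    (hasDerivAt_exp_sub_add_exp_sub (-a) (- -b) s s)]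
  simp only [sub_self, exp_zero, mul_one, expSecondDerivRatio]
  ring_nf

theorem Finset.sum_apply_update_of_mem {ι α M : Type*} [DecidableEq ι] [AddCommGroup M]
    {s : Finset ι} {i : ι} (hi : i ∈ s) (f : ι → α → M) (y : ι → α) (t : α) :
    ∑ j ∈ s, f j (update y i t j) = ∑ j ∈ s, f j (y j) + (f i t - f i (y i)) := by
  simp only [apply_update f y i t, sum_update_of_mem hi,
    sum_eq_add_sum_sdiff_singleton_of_mem hi fun j => f j (y j)]
  abel

theorem Finset.sum_apply_update_of_notMem {ι α M : Type*} [DecidableEq ι] [AddCommMonoid M]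
    {s : Finset ι} {i : ι} (hi : i ∉ s) (f : ι → α → M) (y : ι → α) (t : α) :
    ∑ j ∈ s, f j (update y i t j) = ∑ j ∈ s, f j (y j) := by
  simp only [apply_update f y i t, sum_update_of_notMem hi]

theorem Finset.sum_apply_update_succ_of_mem {α M : Type*} [AddCommGroup M]
    {s : Finset ℕ} {k : ℕ} (hk : k ∈ s) (f : ℕ → α → M) (y : ℕ → α) (t : α) :
    ∑ j ∈ s, f j (update y (k + 1) t (j + 1))
      = ∑ j ∈ s, f j (y (j + 1)) + (f k t - f k (y (k + 1))) := by
  simp only [update_apply_of_injective y (add_left_injective 1) k t]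
  exact sum_apply_update_of_mem hk f (fun j => y (j + 1)) t

theorem Finset.sum_apply_update_succ_of_notMem {α M : Type*} [AddCommMonoid M]
    {s : Finset ℕ} {k : ℕ} (hk : k ∉ s) (f : ℕ → α → M) (y : ℕ → α) (t : α) :
    ∑ j ∈ s, f j (update y (k + 1) t (j + 1)) = ∑ j ∈ s, f j (y (j + 1)) := by
  simp only [update_apply_of_injective y (add_left_injective 1) k t]
  exact sum_apply_update_of_notMem hk f (fun j => y (j + 1)) t

theorem Finset.sum_Icc_one_eq_sum_range {M : Type*} [AddCommMonoid M] (f : ℕ → M) (N : ℕ) :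
    ∑ i ∈ Icc 1 N, f i = ∑ i ∈ range N, f (i + 1) := by
  rw [range_eq_Ico, sum_Ico_add', zero_add, Ico_add_one_right_eq_Icc]

-- Here `n = m + 2`, and `range m` indexes the interior coordinates `k + 2`.
theorem toda_intertwining_monomial_identity {R : Type*} [CommRing R] (m : ℕ) (u v : ℕ → R)
    (α β : R) :
    expSecondDerivRatio (α + u 1) (v 1) + ∑ k ∈ range m, expSecondDerivRatio (u (k + 2)) (v (k + 2))
        + expSecondDerivRatio (u (m + 2)) β
      - 2 * (2 * α * u 1 + ∑ k ∈ range (m + 1), u (k + 2) * v (k + 1) + β * v (m + 1))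
    = expSecondDerivRatio α (u 1) + ∑ k ∈ range m, expSecondDerivRatio (v (k + 1)) (u (k + 2))
        + expSecondDerivRatio (v (m + 1)) (u (m + 2) + β)
      - 2 * (α * v 1 + ∑ k ∈ range (m + 1), u (k + 1) * v (k + 1) + 2 * β * u (m + 2)) := by
  have htel : ∑ k ∈ range m, (expSecondDerivRatio (u (k + 2)) (v (k + 2))
        - expSecondDerivRatio (v (k + 1)) (u (k + 2))
        - 2 * (u (k + 2) * v (k + 1)) + 2 * (u (k + 2) * v (k + 2)))
      = (v (m + 1) ^ 2 - v (m + 1)) - (v 1 ^ 2 - v 1) := by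
    rw [← sum_range_sub (fun j => v (j + 1) ^ 2 - v (j + 1))]
    refine sum_congr rfl fun k _ => ?_
    unfold expSecondDerivRatio
    ring
  simp only [sum_add_distrib, sum_sub_distrib, ← mul_sum] at htel
  rw [sum_range_succ (fun k => u (k + 2) * v (k + 1)),
    sum_range_succ' (fun k => u (k + 1) * v (k + 1))]
  unfold expSecondDerivRatio at *
  linear_combination htel

noncomputable def todaKernelExponent (n : ℕ) (g x z : ℕ → ℝ) : ℝ :=
  -(g 1 * exp (x 1 + z 1))
    - (∑ i ∈ Icc 1 (n - 1), (exp (x i - z i) + g (i + 1) * exp (z (i + 1) - x i)))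
    - exp (x n - z n) - g (n + 1) * exp (-x n - z n)

section coordinates

variable {n : ℕ} (g x z : ℕ → ℝ) (t : ℝ)

theorem todaKernelExponent_update_x_one (hn : 2 ≤ n) :
    todaKernelExponent n g (update x 1 t) z = todaKernelExponent n g x z
      - (g 1 * exp (x 1 + z 1) + exp (x 1 - z 1)) * (exp (t - x 1) - 1)
      - g 2 * exp (z 2 - x 1) * (exp (x 1 - t) - 1) := by
  unfold todaKernelExponent
  rw [sum_apply_update_of_mem (by simp only [mem_Icc]; omega)
    (fun j w => exp (w - z j) + g (j + 1) * exp (z (j + 1) - w)) x t]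
  simp only [update_self, update_of_ne (show n ≠ 1 by omega), exp_sub, exp_add, exp_neg]
  field_simp
  ring

theorem todaKernelExponent_update_x_of_lt {i : ℕ} (hi : 1 < i) (hin : i < n) :
    todaKernelExponent n g (update x i t) z = todaKernelExponent n g x z
      - exp (x i - z i) * (exp (t - x i) - 1)
      - g (i + 1) * exp (z (i + 1) - x i) * (exp (x i - t) - 1) := by
  unfold todaKernelExponent
  rw [sum_apply_update_of_mem (by simp only [mem_Icc]; omega)
    (fun j w => exp (w - z j) + g (j + 1) * exp (z (j + 1) - w)) x t]
  simp only [update_of_ne (show n ≠ i by omega), update_of_ne (show 1 ≠ i by omega),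
    exp_sub, exp_add, exp_neg]
  field_simp
  ring

theorem todaKernelExponent_update_x_self (hn : 2 ≤ n) :
    todaKernelExponent n g (update x n t) z = todaKernelExponent n g x z
      - exp (x n - z n) * (exp (t - x n) - 1)
      - g (n + 1) * exp (-x n - z n) * (exp (x n - t) - 1) := by
  unfold todaKernelExponent
  rw [sum_apply_update_of_notMem (by simp only [mem_Icc]; omega)
    (fun j w => exp (w - z j) + g (j + 1) * exp (z (j + 1) - w)) x t]
  simp only [update_self, update_of_ne (show 1 ≠ n by omega), exp_sub, exp_add, exp_neg]
  field_simp
  ring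

theorem todaKernelExponent_update_z_one (hn : 2 ≤ n) :
    todaKernelExponent n g x (update z 1 t) = todaKernelExponent n g x z
      - g 1 * exp (x 1 + z 1) * (exp (t - z 1) - 1)
      - exp (x 1 - z 1) * (exp (z 1 - t) - 1) := by
  unfold todaKernelExponent
  rw [sum_add_distrib, sum_add_distrib,
    sum_apply_update_of_mem (by simp only [mem_Icc]; omega) (fun j w => exp (x j - w)) z t,
    sum_apply_update_succ_of_notMem (k := 0) (by simp) (fun j w => g (j + 1) * exp (w - x j)) z t]
  simp only [update_self, update_of_ne (show n ≠ 1 by omega), exp_sub, exp_add, exp_neg]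
  field_simp
  ring

theorem todaKernelExponent_update_z_succ {k : ℕ} (hk : 1 ≤ k) (hkn : k + 1 < n) :
    todaKernelExponent n g x (update z (k + 1) t) = todaKernelExponent n g x z
      - g (k + 1) * exp (z (k + 1) - x k) * (exp (t - z (k + 1)) - 1)
      - exp (x (k + 1) - z (k + 1)) * (exp (z (k + 1) - t) - 1) := by
  unfold todaKernelExponent
  rw [sum_add_distrib, sum_add_distrib,
    sum_apply_update_of_mem (by simp only [mem_Icc]; omega) (fun j w => exp (x j - w)) z t,
    sum_apply_update_succ_of_mem (by simp only [mem_Icc]; omega)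
      (fun j w => g (j + 1) * exp (w - x j)) z t]
  simp only [update_of_ne (show n ≠ k + 1 by omega), update_of_ne (show 1 ≠ k + 1 by omega),
    exp_sub, exp_add, exp_neg]
  field_simp
  ring

theorem todaKernelExponent_update_z_self {k : ℕ} (hk : 1 ≤ k) :
    todaKernelExponent (k + 1) g x (update z (k + 1) t) = todaKernelExponent (k + 1) g x z
      - g (k + 1) * exp (z (k + 1) - x k) * (exp (t - z (k + 1)) - 1)
      - (exp (x (k + 1) - z (k + 1)) + g (k + 2) * exp (-x (k + 1) - z (k + 1)))
        * (exp (z (k + 1) - t) - 1) := by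
  unfold todaKernelExponent
  rw [sum_add_distrib, sum_add_distrib,
    sum_apply_update_of_notMem (by simp) (fun j w => exp (x j - w)) z t,
    sum_apply_update_succ_of_mem (by simp only [mem_Icc]; omega)
      (fun j w => g (j + 1) * exp (w - x j)) z t]
  simp only [update_self, update_of_ne (show 1 ≠ k + 1 by omega), exp_sub, exp_add, exp_neg]
  field_simp
  ring

end coordinates

theorem sum_pd2_exp_todaKernelExponent_x (m : ℕ) (g x z : ℕ → ℝ) :
    ∑ i ∈ Icc 1 (m + 2), pd2 (fun x' => exp (todaKernelExponent (m + 2) g x' z)) i x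
      = (expSecondDerivRatio (g 1 * exp (x 1 + z 1) + exp (x 1 - z 1)) (g 2 * exp (z 2 - x 1))
          + ∑ k ∈ range m, expSecondDerivRatio (exp (x (k + 2) - z (k + 2)))
              (g (k + 3) * exp (z (k + 3) - x (k + 2)))
          + expSecondDerivRatio (exp (x (m + 2) - z (m + 2)))
              (g (m + 3) * exp (-x (m + 2) - z (m + 2))))
        * exp (todaKernelExponent (m + 2) g x z) := by
  have h₁ := pd2_exp_of_update_eq (φ := (todaKernelExponent (m + 2) g · z))
    (todaKernelExponent_update_x_one g x z · le_add_self)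
  have hₙ := pd2_exp_of_update_eq (φ := (todaKernelExponent (m + 2) g · z))
    (todaKernelExponent_update_x_self g x z · le_add_self)
  rw [sum_Icc_one_eq_sum_range, sum_range_succ, sum_range_succ', Nat.zero_add, h₁, hₙ,
    sum_congr rfl fun k hk => pd2_exp_of_update_eq
      (todaKernelExponent_update_x_of_lt g x z · (by omega) (by simpa using hk)), ← sum_mul]
  ring

theorem sum_pd2_exp_todaKernelExponent_z (m : ℕ) (g x z : ℕ → ℝ) :
    ∑ i ∈ Icc 1 (m + 2), pd2 (fun z' => exp (todaKernelExponent (m + 2) g x z')) i z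
      = (expSecondDerivRatio (g 1 * exp (x 1 + z 1)) (exp (x 1 - z 1))
          + ∑ k ∈ range m, expSecondDerivRatio (g (k + 2) * exp (z (k + 2) - x (k + 1)))
              (exp (x (k + 2) - z (k + 2)))
          + expSecondDerivRatio (g (m + 2) * exp (z (m + 2) - x (m + 1)))
              (exp (x (m + 2) - z (m + 2)) + g (m + 3) * exp (-x (m + 2) - z (m + 2))))
        * exp (todaKernelExponent (m + 2) g x z) := by
  have h₁ := pd2_exp_of_update_eq (φ := todaKernelExponent (m + 2) g x)
    (todaKernelExponent_update_z_one g x z · le_add_self)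
  have hₙ := pd2_exp_of_update_eq (φ := todaKernelExponent (m + 2) g x)
    (todaKernelExponent_update_z_self (k := m + 1) g x z · le_add_self)
  rw [sum_Icc_one_eq_sum_range, sum_range_succ, sum_range_succ', Nat.zero_add, h₁, hₙ,
    sum_congr rfl fun k hk => pd2_exp_of_update_eq
      (todaKernelExponent_update_z_succ g x z · (by omega) (by simpa using hk)), ← sum_mul]
  ring

theorem toda_potential_x_eq_monomials (m : ℕ) (g x z : ℕ → ℝ) :
    2 * g 1 * exp (2 * x 1) + ∑ i ∈ Icc 1 (m + 1), g (i + 1) * exp (x (i + 1) - x i)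
        + g (m + 2) * g (m + 3) * exp (-x (m + 2) - x (m + 1))
      = 2 * (g 1 * exp (x 1 + z 1)) * exp (x 1 - z 1)
        + ∑ k ∈ range (m + 1),
            exp (x (k + 2) - z (k + 2)) * (g (k + 2) * exp (z (k + 2) - x (k + 1)))
        + g (m + 3) * exp (-x (m + 2) - z (m + 2)) * (g (m + 2) * exp (z (m + 2) - x (m + 1))) := by
  have h₁ : exp (2 * x 1) = exp (x 1 + z 1) * exp (x 1 - z 1) := by rw [← exp_add]; ring_nf
  have hₙ : exp (-x (m + 2) - x (m + 1))
      = exp (-x (m + 2) - z (m + 2)) * exp (z (m + 2) - x (m + 1)) := by rw [← exp_add]; ring_nf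
  have hmid : ∀ k ∈ range (m + 1), g (k + 1 + 1) * exp (x (k + 1 + 1) - x (k + 1))
      = exp (x (k + 2) - z (k + 2)) * (g (k + 2) * exp (z (k + 2) - x (k + 1))) := by
    intro k _
    rw [mul_left_comm, ← exp_add]
    ring_nf
  rw [sum_Icc_one_eq_sum_range, sum_congr rfl hmid, h₁, hₙ]
  ring

theorem toda_potential_z_eq_monomials (m : ℕ) (g x z : ℕ → ℝ) :
    g 1 * g 2 * exp (z 1 + z 2) + ∑ i ∈ Icc 1 (m + 1), g (i + 1) * exp (z (i + 1) - z i)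
        + 2 * g (m + 3) * exp (-2 * z (m + 2))
      = g 1 * exp (x 1 + z 1) * (g 2 * exp (z 2 - x 1))
        + ∑ k ∈ range (m + 1),
            exp (x (k + 1) - z (k + 1)) * (g (k + 2) * exp (z (k + 2) - x (k + 1)))
        + 2 * (g (m + 3) * exp (-x (m + 2) - z (m + 2))) * exp (x (m + 2) - z (m + 2)) := by
  have h₁ : exp (z 1 + z 2) = exp (x 1 + z 1) * exp (z 2 - x 1) := by rw [← exp_add]; ring_nf
  have hₙ : exp (-2 * z (m + 2))
      = exp (-x (m + 2) - z (m + 2)) * exp (x (m + 2) - z (m + 2)) := by rw [← exp_add]; ring_nf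
  have hmid : ∀ k ∈ range (m + 1), g (k + 1 + 1) * exp (z (k + 1 + 1) - z (k + 1))
      = exp (x (k + 1) - z (k + 1)) * (g (k + 2) * exp (z (k + 2) - x (k + 1))) := by
    intro k _
    rw [mul_left_comm, ← exp_add]
    ring_nf
  rw [sum_Icc_one_eq_sum_range, sum_congr rfl hmid, h₁, hₙ]
  ring

/-- The elementary kernel intertwining the two realizations of the twisted affine
`A_{2n−1}^{(2)}` Toda chain, pointwise. -/
theorem stmt_13 (n : ℕ) (hn : 2 ≤ n) (g : ℕ → ℝ) :
    let Q : (ℕ → ℝ) → (ℕ → ℝ) → ℝ := fun x z =>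
      Real.exp (-(g 1 * Real.exp (x 1 + z 1))
        - (∑ i ∈ Finset.Icc 1 (n - 1),
            (Real.exp (x i - z i) + g (i + 1) * Real.exp (z (i + 1) - x i)))
        - Real.exp (x n - z n) - g (n + 1) * Real.exp (-x n - z n))
    ∀ x z : ℕ → ℝ,
      -(1 / 2) * (∑ i ∈ Finset.Icc 1 n, pd2 (fun x' => Q x' z) i x)
          + (2 * g 1 * Real.exp (2 * x 1)
              + (∑ i ∈ Finset.Icc 1 (n - 1), g (i + 1) * Real.exp (x (i + 1) - x i))
              + g n * g (n + 1) * Real.exp (-x n - x (n - 1))) * Q x z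
        = -(1 / 2) * (∑ i ∈ Finset.Icc 1 n, pd2 (fun z' => Q x z') i z)
          + (g 1 * g 2 * Real.exp (z 1 + z 2)
              + (∑ i ∈ Finset.Icc 1 (n - 1), g (i + 1) * Real.exp (z (i + 1) - z i))
              + 2 * g (n + 1) * Real.exp (-2 * z n)) * Q x z := by
  intro Q x z
  obtain ⟨m, rfl⟩ : ∃ m, n = m + 2 := ⟨n - 2, by omega⟩
  have hQ : ∀ x' z', Q x' z' = exp (todaKernelExponent (m + 2) g x' z') := fun _ _ => rfl
  have key := toda_intertwining_monomial_identity m (fun j => exp (x j - z j))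
    (fun j => g (j + 1) * exp (z (j + 1) - x j)) (g 1 * exp (x 1 + z 1))
    (g (m + 3) * exp (-x (m + 2) - z (m + 2)))
  simp only [Nat.add_assoc, Nat.reduceAdd] at key
  simp only [hQ, show m + 2 - 1 = m + 1 from rfl, Nat.add_assoc, Nat.reduceAdd]
  rw [sum_pd2_exp_todaKernelExponent_x, sum_pd2_exp_todaKernelExponent_z,
    toda_potential_x_eq_monomials m g x z, toda_potential_z_eq_monomials m g x z]
  linear_combination (-(1 / 2) * exp (todaKernelExponent (m + 2) g x z)) * key
end
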